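/- Let ρ_{AB} = ∑_α p_α ρ_A^α ⊗ ρ_B^α be a bipartite density matrix, where the p_α are probabilities and the ρ_A^α are density matrices on ℂ^{d_A} whose supports are spanned by pairwise disjoint subsets of the standard basis of ℂ^{d_A} (pairwise perfectly distinguishable by incoherent measurements). Then I(A:B)_ρ = I(A:B)_{Φ_A(ρ)}, where Φ_A is dephasing of subsystem A in the standard basis and I(A:B)_σ = S(σ_A) + S(σ_B) − S(σ_{AB}) is the quantum mutual information. Equivalently, the basis-dependent discord δ(B|A)_ρ := I(A:B)_ρ − I(A:B)_{Φ_A(ρ)} vanishes. -/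

import Mathlib

open Matrix
open scoped ComplexOrder Kronecker

/-- Von Neumann entropy of a matrix, via the eigenvalues of a Hermitian matrix
(junk value `0` on non-Hermitian input). -/
noncomputable def vnEntropy {n : Type*} [Fintype n] [DecidableEq n]
    (ρ : Matrix n n ℂ) : ℝ :=
  if h : ρ.IsHermitian then -∑ i, h.eigenvalues i * Real.log (h.eigenvalues i) else 0

/-- Partial trace over subsystem `B`. -/
noncomputable def ptrB {dA dB : ℕ}
    (ρ : Matrix (Fin dA × Fin dB) (Fin dA × Fin dB) ℂ) : Matrix (Fin dA) (Fin dA) ℂ :=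
  Matrix.of fun i i' => ∑ b, ρ (i, b) (i', b)

/-- Partial trace over subsystem `A`. -/
noncomputable def ptrA {dA dB : ℕ}
    (ρ : Matrix (Fin dA × Fin dB) (Fin dA × Fin dB) ℂ) : Matrix (Fin dB) (Fin dB) ℂ :=
  Matrix.of fun b b' => ∑ i, ρ (i, b) (i, b')

/-- Quantum mutual information `I(A:B) = S(ρ_A) + S(ρ_B) - S(ρ_{AB})`. -/
noncomputable def mutualInfo {dA dB : ℕ}
    (ρ : Matrix (Fin dA × Fin dB) (Fin dA × Fin dB) ℂ) : ℝ :=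
  vnEntropy (ptrB ρ) + vnEntropy (ptrA ρ) - vnEntropy ρ

/-- Dephasing of subsystem `A` in the standard basis. -/
noncomputable def dephA {dA dB : ℕ}
    (ρ : Matrix (Fin dA × Fin dB) (Fin dA × Fin dB) ℂ) :
    Matrix (Fin dA × Fin dB) (Fin dA × Fin dB) ℂ :=
  Matrix.of fun p q => if p.1 = q.1 then ρ p q else 0


/-!
The von Neumann entropy of a Hermitian matrix is a function of its characteristic polynomial,
and as such it is additive over products of polynomials. Since the `ρA α` live on disjoint
coordinate blocks, `ρ` and `ρ_A` are block diagonal with blocks `p α • (ρA α ⊗ ρB α)` and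
`p α • ρA α`; together with `S(X ⊗ Y) = tr Y · S(X) + tr X · S(Y)` this gives
`S(ρ) - S(ρ_A) = ∑ α, p α S(ρB α)`. Dephasing replaces each `ρA α` by its diagonal, which keeps
the block structure and the traces and does not change `ρ_B`, so the mutual information is
unchanged.
-/

open Function Polynomial

noncomputable def rootEntropy (P : ℂ[X]) : ℝ :=
  (P.roots.map fun z => Real.negMulLog z.re).sum

lemma rootEntropy_X_pow (k : ℕ) : rootEntropy ((X : ℂ[X]) ^ k) = 0 := by
  simp [rootEntropy, Multiset.nsmul_singleton]

lemma rootEntropy_prod {κ : Type*} (s : Finset κ) (f : κ → ℂ[X])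
    (hf : ∀ a ∈ s, f a ≠ 0) :
    rootEntropy (∏ a ∈ s, f a) = ∑ a ∈ s, rootEntropy (f a) := by
  rw [rootEntropy, roots_prod f s (Finset.prod_ne_zero_iff.2 hf), Multiset.map_bind,
    Multiset.sum_bind]
  rfl

lemma rootEntropy_prod_X_sub_C {κ : Type*} (s : Finset κ) (w : κ → ℂ) :
    rootEntropy (∏ i ∈ s, (X - C (w i))) = ∑ i ∈ s, Real.negMulLog (w i).re := by
  rw [rootEntropy_prod _ _ fun i _ => X_sub_C_ne_zero (w i)]
  simp [rootEntropy]

lemma exists_injective_coloring_of_pairwise_disjoint {n κ : Type*} [Finite κ] (S : κ → Finset n)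
    (hS : Pairwise (Disjoint on S)) :
    ∃ (c : n → ℕ) (g : κ → ℕ), g.Injective ∧ ∀ α i, i ∈ S α → c i = g α := by
  classical
  obtain ⟨k, ⟨e⟩⟩ := Finite.exists_equiv_fin κ
  refine ⟨fun i => if h : ∃ α, i ∈ S α then e h.choose else 0, fun α => e α,
    fun α β h => e.injective (Fin.val_injective h), fun α i hi => ?_⟩
  have hex : ∃ β, i ∈ S β := ⟨α, hi⟩
  simp only [dif_pos hex]
  by_contra hne
  exact Finset.disjoint_left.mp (hS fun h => hne (by rw [h])) hex.choose_spec hi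

namespace Matrix

variable {n m : Type*}

lemma IsHermitian.kronecker {A : Matrix n n ℂ} {B : Matrix m m ℂ} (hA : A.IsHermitian)
    (hB : B.IsHermitian) : (A ⊗ₖ B).IsHermitian := by
  rw [IsHermitian, conjTranspose_kronecker, hA.eq, hB.eq]

lemma IsHermitian.diagonal_diag [DecidableEq n] {A : Matrix n n ℂ} (hA : A.IsHermitian) :
    (diagonal A.diag).IsHermitian :=
  isHermitian_diagonal_of_self_adjoint _ (funext fun i => hA.apply i i)

variable [Fintype n] [DecidableEq n] [Fintype m] [DecidableEq m]

lemma IsHermitian.rootEntropy_charpoly {A : Matrix n n ℂ} (hA : A.IsHermitian) :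
    rootEntropy A.charpoly = ∑ i, Real.negMulLog (hA.eigenvalues i) := by
  rw [hA.charpoly_eq, rootEntropy_prod_X_sub_C]
  simp

lemma IsHermitian.vnEntropy_eq_rootEntropy_charpoly {A : Matrix n n ℂ} (hA : A.IsHermitian) :
    vnEntropy A = rootEntropy A.charpoly := by
  simp [vnEntropy, hA, hA.rootEntropy_charpoly, Real.negMulLog]

lemma IsHermitian.charpoly_kronecker {A : Matrix n n ℂ} {B : Matrix m m ℂ} (hA : A.IsHermitian)
    (hB : B.IsHermitian) :
    (A ⊗ₖ B).charpoly =
      ∏ p : n × m, (X - C ((hA.eigenvalues p.1 * hB.eigenvalues p.2 : ℝ) : ℂ)) := by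
  conv_lhs => rw [hA.spectral_theorem, hB.spectral_theorem, Unitary.conjStarAlgAut_apply,
    Unitary.conjStarAlgAut_apply, mul_kronecker_mul, mul_kronecker_mul, charpoly_mul_comm,
    ← mul_assoc, ← mul_kronecker_mul, Unitary.coe_star_mul_self, Unitary.coe_star_mul_self,
    one_kronecker_one, one_mul, diagonal_kronecker_diagonal, charpoly_diagonal]
  simp

lemma IsHermitian.rootEntropy_charpoly_kronecker {A : Matrix n n ℂ} {B : Matrix m m ℂ}
    (hA : A.IsHermitian) (hB : B.IsHermitian) :
    rootEntropy (A ⊗ₖ B).charpoly =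
      B.trace.re * rootEntropy A.charpoly + A.trace.re * rootEntropy B.charpoly := by
  rw [hA.charpoly_kronecker hB, rootEntropy_prod_X_sub_C, hA.rootEntropy_charpoly,
    hB.rootEntropy_charpoly, hA.trace_eq_sum_eigenvalues, hB.trace_eq_sum_eigenvalues]
  simp only [RCLike.ofReal_eq_complex_ofReal, Complex.ofReal_re, Real.negMulLog_mul,
    Fintype.sum_prod_type, Finset.sum_add_distrib, Complex.re_sum, Finset.sum_mul, Finset.mul_sum]
  exact congrArg _ Finset.sum_comm

lemma rootEntropy_charpoly_eq_sum_toSquareBlock {α : Type*} [LinearOrder α] (c : n → α)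
    {M : Matrix n n ℂ} (hM : ∀ i j, c i ≠ c j → M i j = 0) :
    rootEntropy M.charpoly =
      ∑ a ∈ Finset.univ.image c, rootEntropy (M.toSquareBlock c a).charpoly := by
  rw [(show M.BlockTriangular c from fun i j h => hM i j h.ne').charpoly, rootEntropy_prod]
  exact fun a _ => (charpoly_monic _).ne_zero

lemma rootEntropy_charpoly_sum_of_pairwise {κ : Type*} [Fintype κ] (N : κ → Matrix n n ℂ)
    (hN : Pairwise fun α β => N α = 0 ∨ N β = 0) :
    rootEntropy (∑ α, N α).charpoly = ∑ α, rootEntropy (N α).charpoly := by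
  by_cases hzero : ∀ α, N α = 0
  · simp [hzero, charpoly_zero, rootEntropy_X_pow]
  push Not at hzero
  obtain ⟨α₀, hα₀⟩ := hzero
  have hrest : ∀ α ≠ α₀, N α = 0 := fun α hα => (hN hα).resolve_right hα₀
  rw [Finset.sum_eq_single α₀ (fun α _ hα => hrest α hα) (by simp),
    Finset.sum_eq_single α₀ (fun α _ hα => by simp [hrest α hα, charpoly_zero, rootEntropy_X_pow])
      (by simp)]

lemma rootEntropy_charpoly_sum_of_disjoint {κ : Type*} [Fintype κ] (M : κ → Matrix n n ℂ)
    (S : κ → Finset n) (hS : Pairwise (Disjoint on S))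
    (hM : ∀ α i j, i ∉ S α ∨ j ∉ S α → M α i j = 0) :
    rootEntropy (∑ α, M α).charpoly = ∑ α, rootEntropy (M α).charpoly := by
  obtain ⟨c, g, hg, hc⟩ := exists_injective_coloring_of_pairwise_disjoint S hS
  have hblockDiag : ∀ α i j, c i ≠ c j → M α i j = 0 := fun α i j hij =>
    hM α i j (by by_contra! h; exact hij ((hc α i h.1).trans (hc α j h.2).symm))
  have hblock : ∀ α a, g α ≠ a → (M α).toSquareBlock c a = 0 := by
    intro α a hα
    ext ⟨i, hi⟩ j
    exact hM α i j (Or.inl fun h => hα ((hc α i h).symm.trans hi))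
  rw [rootEntropy_charpoly_eq_sum_toSquareBlock c fun i j hij => by
      simp [sum_apply, hblockDiag _ i j hij],
    Finset.sum_congr rfl fun α _ => rootEntropy_charpoly_eq_sum_toSquareBlock c (hblockDiag α),
    Finset.sum_comm]
  refine Finset.sum_congr rfl fun a _ => ?_
  have hsum : (∑ α, M α).toSquareBlock c a = ∑ α, (M α).toSquareBlock c a := by
    ext i j
    simp [toSquareBlock_def, sum_apply]
  rw [hsum, rootEntropy_charpoly_sum_of_pairwise]
  intro α β hαβ
  by_cases hα : g α = a
  · exact Or.inr (hblock β a fun hβ => hαβ (hg (hα.trans hβ.symm)))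
  · exact Or.inl (hblock α a hα)

end Matrix

section Bipartite

variable {dA dB : ℕ} {ι : Type*} [Fintype ι]

lemma ptrB_sum_smul_kronecker (c : ι → ℂ) (A : ι → Matrix (Fin dA) (Fin dA) ℂ)
    (B : ι → Matrix (Fin dB) (Fin dB) ℂ) :
    ptrB (∑ α, c α • (A α ⊗ₖ B α)) = ∑ α, (c α * (B α).trace) • A α := by
  ext i j
  simp only [ptrB, of_apply, Matrix.sum_apply, Matrix.smul_apply, kroneckerMap_apply,
    smul_eq_mul, trace, Matrix.diag_apply, Finset.mul_sum, Finset.sum_mul]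
  rw [Finset.sum_comm]
  exact Finset.sum_congr rfl fun α _ => Finset.sum_congr rfl fun b _ => by ring

lemma dephA_sum_smul_kronecker (c : ι → ℂ) (A : ι → Matrix (Fin dA) (Fin dA) ℂ)
    (B : ι → Matrix (Fin dB) (Fin dB) ℂ) :
    dephA (∑ α, c α • (A α ⊗ₖ B α)) = ∑ α, c α • (diagonal (A α).diag ⊗ₖ B α) := by
  ext ⟨i, b⟩ ⟨j, b'⟩
  by_cases hij : i = j
  · subst hij
    simp [dephA, Matrix.sum_apply]
  · simp [dephA, Matrix.sum_apply, hij]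

lemma ptrA_dephA (ρ : Matrix (Fin dA × Fin dB) (Fin dA × Fin dB) ℂ) :
    ptrA (dephA ρ) = ptrA ρ := by
  ext b b'
  simp [ptrA, dephA]

lemma isHermitian_sum_ofReal_smul {n : Type*} (p : ι → ℝ) {M : ι → Matrix n n ℂ}
    (hM : ∀ α, (M α).IsHermitian) : (∑ α, (p α : ℂ) • M α).IsHermitian :=
  isSelfAdjoint_sum _ fun α _ => (hM α).smul (Complex.conj_ofReal (p α))

lemma vnEntropy_sub_vnEntropy_ptrB_of_disjoint (p : ι → ℝ)
    (τ : ι → Matrix (Fin dA) (Fin dA) ℂ) (ρB : ι → Matrix (Fin dB) (Fin dB) ℂ)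
    (hτ : ∀ α, (τ α).IsHermitian ∧ (τ α).trace = 1)
    (hρB : ∀ α, (ρB α).IsHermitian ∧ (ρB α).trace = 1)
    (S : ι → Finset (Fin dA)) (hS : Pairwise (Disjoint on S))
    (hsupp : ∀ α i j, i ∉ S α ∨ j ∉ S α → τ α i j = 0) :
    vnEntropy (∑ α, (p α : ℂ) • (τ α ⊗ₖ ρB α))
        - vnEntropy (ptrB (∑ α, (p α : ℂ) • (τ α ⊗ₖ ρB α))) =
      ∑ α, p α * vnEntropy (ρB α) := by
  have hptrB : ptrB (∑ α, (p α : ℂ) • (τ α ⊗ₖ ρB α)) = ∑ α, (p α : ℂ) • τ α := by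
    simp only [ptrB_sum_smul_kronecker, (hρB _).2, mul_one]
  have hpτ : ∀ α, ((p α : ℂ) • τ α).IsHermitian := fun α =>
    (hτ α).1.smul (Complex.conj_ofReal (p α))
  have hentAB : rootEntropy (∑ α, (p α : ℂ) • (τ α ⊗ₖ ρB α)).charpoly =
      ∑ α, rootEntropy ((p α : ℂ) • (τ α ⊗ₖ ρB α)).charpoly := by
    refine rootEntropy_charpoly_sum_of_disjoint _ (fun α => S α ×ˢ Finset.univ)
      (fun α β hαβ => Finset.disjoint_product.2 (Or.inl (hS hαβ))) fun α x y hxy => ?_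
    have : τ α x.1 y.1 = 0 := hsupp α x.1 y.1 (by simpa using hxy)
    simp [this]
  have hentA : rootEntropy (∑ α, (p α : ℂ) • τ α).charpoly =
      ∑ α, rootEntropy ((p α : ℂ) • τ α).charpoly :=
    rootEntropy_charpoly_sum_of_disjoint _ S hS fun α i j hij => by simp [hsupp α i j hij]
  have hAB : (∑ α, (p α : ℂ) • (τ α ⊗ₖ ρB α)).IsHermitian :=
    isHermitian_sum_ofReal_smul p fun α => (hτ α).1.kronecker (hρB α).1
  have hA : (∑ α, (p α : ℂ) • τ α).IsHermitian := isHermitian_sum_ofReal_smul p fun α => (hτ α).1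
  rw [hptrB, hAB.vnEntropy_eq_rootEntropy_charpoly, hA.vnEntropy_eq_rootEntropy_charpoly,
    hentAB, hentA, ← Finset.sum_sub_distrib]
  refine Finset.sum_congr rfl fun α _ => ?_
  rw [← smul_kronecker, (hpτ α).rootEntropy_charpoly_kronecker (hρB α).1,
    (hρB α).1.vnEntropy_eq_rootEntropy_charpoly, trace_smul, (hτ α).2, (hρB α).2]
  simp

end Bipartite

theorem stmt_19_general {dA dB : ℕ} {ι : Type*} [Fintype ι]
    (p : ι → ℝ)
    (ρA : ι → Matrix (Fin dA) (Fin dA) ℂ) (ρB : ι → Matrix (Fin dB) (Fin dB) ℂ)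
    (hρA : ∀ α, (ρA α).PosSemidef ∧ (ρA α).trace = 1)
    (hρB : ∀ α, (ρB α).PosSemidef ∧ (ρB α).trace = 1)
    (S : ι → Finset (Fin dA))
    (hdisj : ∀ α β, α ≠ β → Disjoint (S α) (S β))
    (hsupp : ∀ α i j, i ∉ S α ∨ j ∉ S α → ρA α i j = 0)
    (ρ : Matrix (Fin dA × Fin dB) (Fin dA × Fin dB) ℂ)
    (hρ : ρ = ∑ α, ((p α : ℝ) : ℂ) • (ρA α ⊗ₖ ρB α)) :
    mutualInfo ρ = mutualInfo (dephA ρ) := by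
  have hB : ∀ α, (ρB α).IsHermitian ∧ (ρB α).trace = 1 := fun α => ⟨(hρB α).1.1, (hρB α).2⟩
  have hA : ∀ α, (ρA α).IsHermitian ∧ (ρA α).trace = 1 := fun α => ⟨(hρA α).1.1, (hρA α).2⟩
  have hA_deph : ∀ α, (diagonal (ρA α).diag).IsHermitian ∧ (diagonal (ρA α).diag).trace = 1 :=
    fun α => ⟨(hA α).1.diagonal_diag, by rw [trace_diagonal]; exact (hA α).2⟩
  have hsupp_deph : ∀ α i j, i ∉ S α ∨ j ∉ S α → diagonal (ρA α).diag i j = 0 := by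
    intro α i j hij
    by_cases h : i = j
    · subst h; simpa using hsupp α i i hij
    · exact diagonal_apply_ne _ h
  have hAB := vnEntropy_sub_vnEntropy_ptrB_of_disjoint p ρA ρB hA hB S hdisj hsupp
  have hAB_deph := vnEntropy_sub_vnEntropy_ptrB_of_disjoint p _ ρB hA_deph hB S hdisj hsupp_deph
  rw [← dephA_sum_smul_kronecker, ← hρ] at hAB_deph
  rw [← hρ] at hAB
  rw [mutualInfo, mutualInfo, ptrA_dephA]
  linarith

/-- If `ρ_{AB} = ∑ α, p α • (ρA α ⊗ ρB α)` where the `ρA α` are supported on pairwise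
disjoint subsets of the incoherent basis, then the mutual information is unchanged by
dephasing subsystem `A`: the basis-dependent discord `δ(B|A)` vanishes. -/
theorem stmt_19 {dA dB : ℕ} {ι : Type*} [Fintype ι]
    (p : ι → ℝ) (hp : ∀ α, 0 ≤ p α) (hp1 : ∑ α, p α = 1)
    (ρA : ι → Matrix (Fin dA) (Fin dA) ℂ) (ρB : ι → Matrix (Fin dB) (Fin dB) ℂ)
    (hρA : ∀ α, (ρA α).PosSemidef ∧ (ρA α).trace = 1)
    (hρB : ∀ α, (ρB α).PosSemidef ∧ (ρB α).trace = 1)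
    (S : ι → Finset (Fin dA))
    (hdisj : ∀ α β, α ≠ β → Disjoint (S α) (S β))
    (hsupp : ∀ α i j, i ∉ S α ∨ j ∉ S α → ρA α i j = 0)
    (ρ : Matrix (Fin dA × Fin dB) (Fin dA × Fin dB) ℂ)
    (hρ : ρ = ∑ α, ((p α : ℝ) : ℂ) • (ρA α ⊗ₖ ρB α)) :
    mutualInfo ρ = mutualInfo (dephA ρ) :=
  stmt_19_general p ρA ρB hρA hρB S hdisj hsupp ρ hρ
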